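/- Let P ⊆ ℝ^d be a 0/1-polytope and let u, v ∈ vert(P) be two distinct vertices of P. Then the number of walls W of P such that u, v, and their mirror images u^W and v^W are all contained in W is at most |vert(P)|/2. -/

import Mathlib

open scoped Classical

noncomputable section

/-- All points of `X` are 0/1-vectors. -/
def IsZeroOne {ι : Type*} (X : Finset (ι → ℝ)) : Prop :=
  ∀ x ∈ X, ∀ i, x i = 0 ∨ x i = 1

/-- Two vertices `u v` of the 0/1-polytope `P = conv X` are adjacent iff they are
distinct and there is a linear functional whose maximum over `P` is attained
exactly on the segment `[u, v]`. -/
def PolytopeAdj {ι : Type*} [Fintype ι] (X : Finset (ι → ℝ)) (u v : ι → ℝ) : Prop :=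
  u ∈ X ∧ v ∈ X ∧ u ≠ v ∧ ∃ (f : (ι → ℝ) →ₗ[ℝ] ℝ) (c : ℝ),
    (∀ x ∈ convexHull ℝ (X : Set (ι → ℝ)), f x ≤ c) ∧
    {x ∈ convexHull ℝ (X : Set (ι → ℝ)) | f x = c} = segment ℝ u v

/-- The graph `G(P)` of the 0/1-polytope `P = conv X`, on the vertex set `X`. -/
def polytopeGraph {ι : Type*} [Fintype ι] (X : Finset (ι → ℝ)) :
    SimpleGraph {x // x ∈ X} where
  Adj u v := PolytopeAdj X u.1 v.1
  symm := by
    constructor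
    rintro u v ⟨hu, hv, hne, f, c, h1, h2⟩
    exact ⟨hv, hu, hne.symm, f, c, h1, by rw [h2, segment_symm]⟩
  loopless := by constructor; rintro u ⟨_, _, hne, _⟩; exact hne rfl
/-- A wall of the 0/1-polytope with vertex set `X`: a nonempty set of vertices
obtained by intersecting `X` with a face of the 0/1-cube, given by a sign vector
`σ ∈ {0,1,⋆}^ι` (encoded as `ι → Option Bool`, `none` being `⋆`). -/
def IsWall {ι : Type*} (X : Finset (ι → ℝ)) (W : Set (ι → ℝ)) : Prop :=
  W.Nonempty ∧ ∃ σ : ι → Option Bool,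
    W = {x | x ∈ X ∧ ∀ i, ∀ b, σ i = some b → x i = (if b then (1 : ℝ) else 0)}

/-- `σ(W)ᵢ = ⋆`, i.e. the points of `W` do not all agree in coordinate `i`. -/
def IsStarCoord {ι : Type*} (W : Set (ι → ℝ)) (i : ι) : Prop :=
  ∃ x ∈ W, ∃ y ∈ W, x i ≠ y i
/-- The mirror image `x^W = x ⊕ t^(W)` of a 0/1-point `x` with respect to a wall
`W`, where `t^(W)` has ones exactly in the star coordinates of `W`. -/
def mirrorImage {ι : Type*} (W : Set (ι → ℝ)) (x : ι → ℝ) : ι → ℝ :=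
  fun i => if IsStarCoord W i then 1 - x i else x i

/-! The walls counted are mapped to vertices by `W ↦ u^W` and by `W ↦ v^W`. A wall through a
0/1-point `u` is determined by its star coordinates, which `u^W` records as the coordinates
where it differs from `u`; so both maps are injective. A coordinate where `u` and `v` differ is a
star coordinate of every wall containing both, and there `u^W = 1 - u ≠ 1 - v = v^W'`; so the two
images are disjoint subsets of `vert(P)`. -/

namespace IsWall

variable {ι : Type*} {X : Finset (ι → ℝ)} {W : Set (ι → ℝ)}

theorem subset (hW : IsWall X W) : W ⊆ X := by
  obtain ⟨-, σ, rfl⟩ := hW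
  exact fun x hx => hx.1

theorem eq_setOf_agree {u : ι → ℝ} (hW : IsWall X W) (hu : u ∈ W) :
    W = {x | x ∈ X ∧ ∀ i, ¬IsStarCoord W i → x i = u i} := by
  obtain ⟨σ, hσ⟩ := hW.2
  ext x
  constructor
  · intro hx
    exact ⟨hW.subset hx, fun i hi => by_contra fun h => hi ⟨x, hx, u, hu, h⟩⟩
  · rintro ⟨hxX, hagree⟩
    have hu' := hσ ▸ hu
    rw [hσ]
    refine ⟨hxX, fun i b hb => ?_⟩
    have hfixed : ¬IsStarCoord W i := by
      rintro ⟨a, ha, c, hc, hne⟩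
      rw [hσ] at ha hc
      exact hne ((ha.2 i b hb).trans (hc.2 i b hb).symm)
    rw [hagree i hfixed, hu'.2 i b hb]

theorem eq_of_isStarCoord_eq {W' : Set (ι → ℝ)} {u : ι → ℝ} (hW : IsWall X W)
    (hW' : IsWall X W') (hu : u ∈ W) (hu' : u ∈ W') (h : IsStarCoord W = IsStarCoord W') :
    W = W' := by
  rw [hW.eq_setOf_agree hu, hW'.eq_setOf_agree hu', h]

end IsWall

section mirrorImage

variable {ι : Type*}

theorem mirrorImage_apply_of_isStarCoord {W : Set (ι → ℝ)} {i : ι} (x : ι → ℝ)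
    (hi : IsStarCoord W i) : mirrorImage W x i = 1 - x i :=
  if_pos hi

theorem mirrorImage_apply_ne_iff {W : Set (ι → ℝ)} {x : ι → ℝ} {i : ι}
    (hx : x i = 0 ∨ x i = 1) : mirrorImage W x i ≠ x i ↔ IsStarCoord W i := by
  unfold mirrorImage
  split_ifs with hi
  · simp only [hi, iff_true]
    rcases hx with hx | hx <;> rw [hx] <;> norm_num
  · simp [hi]

theorem isStarCoord_eq_of_mirrorImage_eq {W W' : Set (ι → ℝ)} {x : ι → ℝ}
    (hx : ∀ i, x i = 0 ∨ x i = 1) (h : mirrorImage W x = mirrorImage W' x) :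
    IsStarCoord W = IsStarCoord W' := by
  funext i
  apply propext
  rw [← mirrorImage_apply_ne_iff (hx i), ← mirrorImage_apply_ne_iff (hx i), h]

theorem mirrorImage_ne_mirrorImage {W W' : Set (ι → ℝ)} {x y : ι → ℝ} {i : ι}
    (hW : IsStarCoord W i) (hW' : IsStarCoord W' i) (hxy : x i ≠ y i) :
    mirrorImage W x ≠ mirrorImage W' y := fun h => by
  have hi := congrFun h i
  rw [mirrorImage_apply_of_isStarCoord x hW, mirrorImage_apply_of_isStarCoord y hW'] at hi
  exact hxy (by linarith)

theorem injOn_mirrorImage {X : Finset (ι → ℝ)} (hX : IsZeroOne X) (u : ι → ℝ) :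
    Set.InjOn (fun W => mirrorImage W u) {W | IsWall X W ∧ u ∈ W} :=
  fun _ hW _ hW' h =>
    hW.1.eq_of_isStarCoord_eq hW'.1 hW.2 hW'.2
      (isStarCoord_eq_of_mirrorImage_eq (hX u (hW.1.subset hW.2)) h)

end mirrorImage

theorem card_walls_with_mirrors_le_general {d : ℕ} (X : Finset (Fin d → ℝ))
    (hX01 : IsZeroOne X) (u v : Fin d → ℝ)
    (huv : u ≠ v) :
    2 * {W : Set (Fin d → ℝ) | IsWall X W ∧ u ∈ W ∧ v ∈ W ∧
        mirrorImage W u ∈ W ∧ mirrorImage W v ∈ W}.ncard ≤ X.card := by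
  set 𝒲 := {W : Set (Fin d → ℝ) | IsWall X W ∧ u ∈ W ∧ v ∈ W ∧
        mirrorImage W u ∈ W ∧ mirrorImage W v ∈ W}
  set A := (fun W => mirrorImage W u) '' 𝒲
  set B := (fun W => mirrorImage W v) '' 𝒲
  have hA : A ⊆ X := Set.image_subset_iff.2 fun W hW => hW.1.subset hW.2.2.2.1
  have hB : B ⊆ X := Set.image_subset_iff.2 fun W hW => hW.1.subset hW.2.2.2.2
  have hAB : Disjoint A B := by
    obtain ⟨i, hi⟩ := Function.ne_iff.mp huv
    rw [Set.disjoint_left]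
    rintro _ ⟨W, hW, rfl⟩ ⟨W', hW', h⟩
    exact mirrorImage_ne_mirrorImage ⟨u, hW.2.1, v, hW.2.2.1, hi⟩
      ⟨u, hW'.2.1, v, hW'.2.2.1, hi⟩ hi h.symm
  have hcardA : A.ncard = 𝒲.ncard := Set.InjOn.ncard_image <|
    (injOn_mirrorImage hX01 u).mono fun _ hW => show _ ∧ _ from ⟨hW.1, hW.2.1⟩
  have hcardB : B.ncard = 𝒲.ncard := Set.InjOn.ncard_image <|
    (injOn_mirrorImage hX01 v).mono fun _ hW => show _ ∧ _ from ⟨hW.1, hW.2.2.1⟩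
  calc 2 * 𝒲.ncard = (A ∪ B).ncard := by
        rw [Set.ncard_union_eq hAB (X.finite_toSet.subset hA) (X.finite_toSet.subset hB)]
        omega
    _ ≤ (X : Set (Fin d → ℝ)).ncard := Set.ncard_le_ncard (Set.union_subset hA hB)
    _ = X.card := Set.ncard_coe_finset X

/-- Let `P ⊆ ℝ^d` be a 0/1-polytope and let `u ≠ v` be two
vertices of `P`. Then the number of walls `W` of `P` such that `u`, `v`, and
their mirror images `u^W`, `v^W` are all contained in `W` is at most
`|vert(P)|/2`. -/
theorem card_walls_with_mirrors_le {d : ℕ} (X : Finset (Fin d → ℝ))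
    (hX01 : IsZeroOne X) (u v : Fin d → ℝ) (hu : u ∈ X) (hv : v ∈ X)
    (huv : u ≠ v) :
    2 * {W : Set (Fin d → ℝ) | IsWall X W ∧ u ∈ W ∧ v ∈ W ∧
        mirrorImage W u ∈ W ∧ mirrorImage W v ∈ W}.ncard ≤ X.card :=
  card_walls_with_mirrors_le_general X hX01 u v huv
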